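/- Let $Y$ be a $T\times n$ real matrix, $X$ a $T\times k$ real matrix, $\Sigma$ an $n\times n$ symmetric positive definite matrix, and $\Psi$ a $k\times k$ symmetric positive definite matrix. Suppose $Y \mid A \sim \mathcal{MN}(XA', \Sigma, I_T)$ and $A \mid \Sigma \sim \mathcal{MN}(\underline{A}, \Sigma, \Psi)$ (matrix-normal distributions). Then the marginal density of $Y$ given $\Sigma$ equals $(2\pi)^{-nT/2} |\Psi|^{-n/2} |S_{xx}|^{-n/2} |\Sigma|^{-T/2} \exp(-\tfrac12 \mathrm{tr}(\Sigma^{-1} S_{y|x}))$, where $S_{xx} = X'X + \Psi^{-1}$, $S_{yx} = Y'X + \underline{A}\Psi^{-1}$, $S_{yy} = Y'Y + \underline{A}\Psi^{-1}\underline{A}'$, and $S_{y|x} = S_{yy} - S_{yx} S_{xx}^{-1} S_{yx}'$. -/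

import Mathlib

/-!
Completing the square in `A`, likelihood × prior is the claimed marginal times the matrix-normal
density `MN(S_yx S_xx⁻¹, Σ, S_xx⁻¹)` of the posterior, and every matrix-normal density integrates
to one. The latter reduces to the standard Gaussian integral on `ℝ^{n × k}`: writing the two
precision matrices as `BᵀB` and `CᵀC`, the exponent becomes `‖B A Cᵀ‖²`, and the linear
substitution `A ↦ B A Cᵀ` has Jacobian `det B ^ k * det C ^ n`.
-/

open Matrix Real MeasureTheory

/-- Matrix-normal density `MN(M, S, P)` for an `n × k` matrix, with row covariance `S`
and column covariance `P`. -/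
noncomputable def matrixNormalPDF {n k : ℕ} (M : Matrix (Fin n) (Fin k) ℝ)
    (S : Matrix (Fin n) (Fin n) ℝ) (P : Matrix (Fin k) (Fin k) ℝ)
    (A : Matrix (Fin n) (Fin k) ℝ) : ℝ :=
  (2 * π) ^ (-(n * k : ℝ) / 2) * P.det ^ (-(n : ℝ) / 2) * S.det ^ (-(k : ℝ) / 2) *
    Real.exp (-(1 / 2) * (S⁻¹ * (A - M) * P⁻¹ * (A - M)ᵀ).trace)

theorem integral_exp_neg_half_sum_sq (ι : Type*) [Fintype ι] :
    ∫ x : ι → ℝ, exp (-(1 / 2) * ∑ i, x i ^ 2) = √(2 * π) ^ Fintype.card ι := by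
  simp_rw [Finset.mul_sum, exp_sum]
  rw [integral_fintype_prod_volume_eq_prod (fun _ t ↦ exp (-(1 / 2) * t ^ 2)), integral_gaussian,
    Finset.prod_const, Finset.card_univ]
  congr 2
  field_simp

theorem integral_exp_neg_half_trace_mul_transpose (m p : Type*) [Fintype m] [Fintype p] :
    ∫ A : m → p → ℝ, exp (-(1 / 2) * (of A * (of A)ᵀ).trace)
      = √(2 * π) ^ (Fintype.card m * Fintype.card p) := by
  have htrace (A : m → p → ℝ) : (of A * (of A)ᵀ).trace = ∑ i, ∑ j, A i j ^ 2 := by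
    simp [trace, mul_apply, sq]
  simp_rw [htrace, Finset.mul_sum (s := Finset.univ (α := m)), exp_sum]
  rw [integral_fintype_prod_volume_eq_prod (E := fun _ : m ↦ p → ℝ)
      (fun _ y ↦ exp (-(1 / 2) * ∑ j, y j ^ 2)),
    integral_exp_neg_half_sum_sq, Finset.prod_const, Finset.card_univ, pow_mul']

theorem integral_comp_linearMap {E F : Type*} [NormedAddCommGroup E] [NormedSpace ℝ E]
    [MeasurableSpace E] [BorelSpace E] [FiniteDimensional ℝ E] (μ : Measure E)
    [μ.IsAddHaarMeasure] [NormedAddCommGroup F] [NormedSpace ℝ F] {g : E →ₗ[ℝ] E}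
    (hg : LinearMap.det g ≠ 0) (f : E → F) :
    ∫ x, f (g x) ∂μ = |LinearMap.det g|⁻¹ • ∫ x, f x ∂μ := by
  let e := (g.equivOfDetNeZero hg).toContinuousLinearEquiv.toHomeomorph
  have he : ⇑e = ⇑g := rfl
  change ∫ x, f (e x) ∂μ = _
  rw [← e.measurableEmbedding.integral_map, he,
    Measure.map_linearMap_addHaar_eq_smul_addHaar μ hg, integral_smul_measure,
    ENNReal.toReal_ofReal (abs_nonneg _), abs_inv]

section mulLeftRight

variable {K m p : Type*} [CommRing K] [Fintype m] [Fintype p]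

def Matrix.mulLeftRight (R : Matrix m m K) (L : Matrix p p K) :
    (m → p → K) →ₗ[K] (m → p → K) where
  toFun A := of.symm (R * of A * L)
  map_add' A B := by simp only [← of_add_of, Matrix.mul_add, Matrix.add_mul]; rfl
  map_smul' c A := by simp only [← smul_of, Matrix.mul_smul, Matrix.smul_mul]; rfl

theorem Matrix.trace_mulLeftRight_mul_transpose (B : Matrix m m K) (C : Matrix p p K)
    (A : m → p → K) :
    (of (mulLeftRight B Cᵀ A) * (of (mulLeftRight B Cᵀ A))ᵀ).trace
      = (Bᵀ * B * of A * (Cᵀ * C) * (of A)ᵀ).trace := by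
  change ((B * of A * Cᵀ) * (B * of A * Cᵀ)ᵀ).trace = _
  simp only [transpose_mul, transpose_transpose, Matrix.mul_assoc]
  rw [trace_mul_comm Bᵀ]
  simp only [Matrix.mul_assoc]

variable [DecidableEq m] [DecidableEq p]

theorem Matrix.det_mulLeftRight (R : Matrix m m K) (L : Matrix p p K) :
    LinearMap.det (mulLeftRight R L) = R.det ^ Fintype.card p * L.det ^ Fintype.card m := by
  let e := (LinearEquiv.curry K K m p).symm
  have hkron : e.toLinearMap ∘ₗ mulLeftRight R L ∘ₗ e.symm.toLinearMap
      = toLin' (kroneckerMap (· * ·) R Lᵀ) := by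
    refine LinearMap.ext fun x ↦ funext fun ⟨i, j⟩ ↦ ?_
    simp only [mulLeftRight, LinearEquiv.symm_symm, LinearMap.coe_comp, LinearEquiv.coe_coe,
      LinearEquiv.coe_curry_symm, LinearMap.coe_mk, AddHom.coe_mk, LinearEquiv.coe_curry,
      Function.comp_apply, Function.uncurry_apply_pair, of_symm_apply, mul_apply, of_apply,
      Function.curry_apply, Finset.sum_mul, toLin'_apply, mulVec, dotProduct, kroneckerMap_apply,
      transpose_apply, Fintype.sum_prod_type, e]
    rw [Finset.sum_comm]
    exact Finset.sum_congr rfl fun _ _ ↦ Finset.sum_congr rfl fun _ _ ↦ by ring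
  rw [← LinearMap.det_conj _ e, hkron, LinearMap.det_toLin', det_kronecker, det_transpose]

end mulLeftRight

open scoped MatrixOrder in
theorem integral_exp_neg_half_trace_posDef {m p : Type*} [Fintype m] [Fintype p]
    [DecidableEq m] [DecidableEq p] {P : Matrix m m ℝ} {Q : Matrix p p ℝ}
    (hP : P.PosDef) (hQ : Q.PosDef) :
    ∫ A : m → p → ℝ, exp (-(1 / 2) * (P * of A * Q * (of A)ᵀ).trace)
      = √(2 * π) ^ (Fintype.card m * Fintype.card p)
          / (√P.det ^ Fintype.card p * √Q.det ^ Fintype.card m) := by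
  have hPdet := hP.det_pos
  have hQdet := hQ.det_pos
  obtain ⟨B, rfl⟩ := CStarAlgebra.nonneg_iff_eq_star_mul_self.mp hP.posSemidef.nonneg
  obtain ⟨C, rfl⟩ := CStarAlgebra.nonneg_iff_eq_star_mul_self.mp hQ.posSemidef.nonneg
  simp only [star_eq_conjTranspose, conjTranspose_eq_transpose_of_trivial, det_mul,
    det_transpose] at hPdet hQdet ⊢
  have hdet : LinearMap.det (mulLeftRight B Cᵀ) ≠ 0 := by
    rw [det_mulLeftRight, det_transpose]
    exact mul_ne_zero (pow_ne_zero _ (mul_self_pos.mp hPdet)) (pow_ne_zero _ (mul_self_pos.mp hQdet))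
  simp_rw [← trace_mulLeftRight_mul_transpose]
  rw [integral_comp_linearMap volume hdet (fun A ↦ exp (-(1 / 2) * (of A * (of A)ᵀ).trace)),
    integral_exp_neg_half_trace_mul_transpose, det_mulLeftRight, det_transpose,
    sqrt_mul_self_eq_abs, sqrt_mul_self_eq_abs, abs_mul, abs_pow, abs_pow, smul_eq_mul,
    div_eq_inv_mul]

theorem Real.rpow_neg_natCast_div_two {x : ℝ} (hx : 0 ≤ x) (n : ℕ) :
    x ^ (-(n : ℝ) / 2) = (√x ^ n)⁻¹ := by
  rw [sqrt_eq_rpow, ← rpow_natCast, ← rpow_mul hx, ← rpow_neg hx]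
  ring_nf

theorem integral_matrixNormalPDF {n k : ℕ} (M : Matrix (Fin n) (Fin k) ℝ)
    {S : Matrix (Fin n) (Fin n) ℝ} {P : Matrix (Fin k) (Fin k) ℝ} (hS : S.PosDef)
    (hP : P.PosDef) :
    ∫ A : Fin n → Fin k → ℝ, matrixNormalPDF M S P (of A) = 1 := by
  have hcentered :
      ∫ A : Fin n → Fin k → ℝ, exp (-(1 / 2) * (S⁻¹ * (of A - M) * P⁻¹ * (of A - M)ᵀ).trace)
        = ∫ A : Fin n → Fin k → ℝ, exp (-(1 / 2) * (S⁻¹ * of A * P⁻¹ * (of A)ᵀ).trace) :=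
    integral_sub_right_eq_self (fun A ↦ exp (-(1 / 2) * (S⁻¹ * of A * P⁻¹ * (of A)ᵀ).trace))
      (of.symm M)
  have hgauss := integral_exp_neg_half_trace_posDef hS.inv hP.inv
  simp only [Fintype.card_fin, det_nonsing_inv, Ring.inverse_eq_inv', sqrt_inv, inv_pow]
    at hgauss
  unfold matrixNormalPDF
  rw [integral_const_mul, hcentered, hgauss, ← Nat.cast_mul,
    rpow_neg_natCast_div_two (by positivity), rpow_neg_natCast_div_two hS.det_pos.le,
    rpow_neg_natCast_div_two hP.det_pos.le]
  have := sqrt_pos.2 hS.det_pos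
  have := sqrt_pos.2 hP.det_pos
  field_simp

section completeSquare

variable {K n k T : Type*} [CommRing K] [Fintype k]

theorem Matrix.residual_add_prior_quadratic_form [Fintype T] (Y : Matrix T n K)
    (X : Matrix T k K) (A Abar : Matrix n k K) {G : Matrix k k K} (hG : Gᵀ = G) :
    (Y - X * Aᵀ)ᵀ * (Y - X * Aᵀ) + (A - Abar) * G * (A - Abar)ᵀ
      = A * (Xᵀ * X + G) * Aᵀ - A * (Yᵀ * X + Abar * G)ᵀ - (Yᵀ * X + Abar * G) * Aᵀ
          + (Yᵀ * Y + Abar * G * Abarᵀ) := by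
  simp only [transpose_sub, transpose_add, transpose_mul, transpose_transpose, hG,
    Matrix.sub_mul, Matrix.mul_sub, Matrix.add_mul, Matrix.mul_add, Matrix.mul_assoc]
  abel

theorem Matrix.mul_mul_transpose_complete_square [DecidableEq k] (A B : Matrix n k K)
    (C : Matrix n n K) {S : Matrix k k K} (hS : IsUnit S.det) (hSt : Sᵀ = S) :
    A * S * Aᵀ - A * Bᵀ - B * Aᵀ + C
      = (A - B * S⁻¹) * S * (A - B * S⁻¹)ᵀ + (C - B * S⁻¹ * Bᵀ) := by
  simp only [transpose_sub, transpose_mul, transpose_nonsing_inv, hSt, Matrix.sub_mul,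
    Matrix.mul_sub, Matrix.mul_assoc, mul_nonsing_inv_cancel_left _ _ hS,
    nonsing_inv_mul_cancel_left _ _ hS]
  abel

end completeSquare

theorem exp_trace_mul_matrixNormalPDF_eq {n k : ℕ} {S : Matrix (Fin n) (Fin n) ℝ}
    {P Q : Matrix (Fin k) (Fin k) ℝ} (hQ : 0 < Q.det) {M M' A : Matrix (Fin n) (Fin k) ℝ}
    {R C : Matrix (Fin n) (Fin n) ℝ}
    (hsquare : R + (A - M) * P⁻¹ * (A - M)ᵀ = (A - M') * Q * (A - M')ᵀ + C) :
    exp (-(1 / 2) * (S⁻¹ * R).trace) * matrixNormalPDF M S P A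
      = P.det ^ (-(n : ℝ) / 2) * Q.det ^ (-(n : ℝ) / 2) * exp (-(1 / 2) * (S⁻¹ * C).trace)
          * matrixNormalPDF M' S Q⁻¹ A := by
  have hexp := congrArg (fun B ↦ exp (-(1 / 2) * (S⁻¹ * B).trace)) hsquare
  simp only [trace_add, mul_add, exp_add, ← Matrix.mul_assoc] at hexp
  have hdet : Q.det ^ (-(n : ℝ) / 2) * Q⁻¹.det ^ (-(n : ℝ) / 2) = 1 := by
    rw [det_nonsing_inv, Ring.inverse_eq_inv', inv_rpow hQ.le,
      mul_inv_cancel₀ (rpow_pos_of_pos hQ _).ne']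
  unfold matrixNormalPDF
  rw [nonsing_inv_nonsing_inv Q hQ.ne'.isUnit]
  grind

theorem marginal_likelihood_of_matrix_normal
    {n k T : ℕ}
    (Y : Matrix (Fin T) (Fin n) ℝ) (X : Matrix (Fin T) (Fin k) ℝ)
    (Sig : Matrix (Fin n) (Fin n) ℝ) (Psi : Matrix (Fin k) (Fin k) ℝ)
    (Abar : Matrix (Fin n) (Fin k) ℝ)
    (hSig : Sig.PosDef) (hPsi : Psi.PosDef)
    (Sxx : Matrix (Fin k) (Fin k) ℝ) (Syx : Matrix (Fin n) (Fin k) ℝ)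
    (Syy Sygx : Matrix (Fin n) (Fin n) ℝ)
    (hSxx : Sxx = Xᵀ * X + Psi⁻¹)
    (hSyx : Syx = Yᵀ * X + Abar * Psi⁻¹)
    (hSyy : Syy = Yᵀ * Y + Abar * Psi⁻¹ * Abarᵀ)
    (hSygx : Sygx = Syy - Syx * Sxx⁻¹ * Syxᵀ) :
    (∫ A : Fin n → Fin k → ℝ,
        -- likelihood `P(Y | A, Sig)`, i.e. `Y | A ~ MN(X Aᵀ, Sig, I_T)` viewed as density in `Y`
        ((2 * π) ^ (-(n * T : ℝ) / 2) * Sig.det ^ (-(T : ℝ) / 2) *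
          Real.exp (-(1 / 2) * (Sig⁻¹ * (Y - X * (Matrix.of A)ᵀ)ᵀ * (Y - X * (Matrix.of A)ᵀ)).trace))
        -- prior `P(A | Sig) = MN(Abar, Sig, Psi)`
        * matrixNormalPDF Abar Sig Psi (Matrix.of A))
      = (2 * π) ^ (-(n * T : ℝ) / 2) * Psi.det ^ (-(n : ℝ) / 2) * Sxx.det ^ (-(n : ℝ) / 2) *
          Sig.det ^ (-(T : ℝ) / 2) * Real.exp (-(1 / 2) * (Sig⁻¹ * Sygx).trace) := by
  have hSxxPD : Sxx.PosDef := by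
    rw [hSxx]
    refine PosDef.posSemidef_add ?_ hPsi.inv
    simpa using posSemidef_conjTranspose_mul_self X
  have hsquare (A : Matrix (Fin n) (Fin k) ℝ) :
      (Y - X * Aᵀ)ᵀ * (Y - X * Aᵀ) + (A - Abar) * Psi⁻¹ * (A - Abar)ᵀ
        = (A - Syx * Sxx⁻¹) * Sxx * (A - Syx * Sxx⁻¹)ᵀ + Sygx := by
    rw [residual_add_prior_quadratic_form Y X A Abar
        (isHermitian_iff_isSymm.mp hPsi.inv.isHermitian).eq, ← hSxx, ← hSyx, ← hSyy, hSygx]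
    exact mul_mul_transpose_complete_square A Syx Syy hSxxPD.det_pos.ne'.isUnit
      (isHermitian_iff_isSymm.mp hSxxPD.isHermitian).eq
  have hposterior (A : Fin n → Fin k → ℝ) :=
    exp_trace_mul_matrixNormalPDF_eq (S := Sig) hSxxPD.det_pos (hsquare (of A))
  simp_rw [Matrix.mul_assoc Sig⁻¹, mul_assoc _ (exp _), hposterior, ← mul_assoc]
  rw [integral_const_mul, integral_matrixNormalPDF _ hSig hSxxPD.inv]
  ring
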